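/- arXiv:2307.00487 — 9 statements merged into one kernel-verified Lean document; each statement's English description precedes it below -/
import Mathlib

section
/- Every almost Hurewicz space is θ-Hurewicz. -/
open Filter Topology Set

def AlphaOpen {X : Type*} [TopologicalSpace X] (A : Set X) : Prop :=
  A ⊆ interior (closure (interior A))

def ThetaOpen {X : Type*} [TopologicalSpace X] (A : Set X) : Prop :=
  ∀ x ∈ A, ∃ B : Set X, IsOpen B ∧ x ∈ B ∧ closure B ⊆ A

def SemiOpen {X : Type*} [TopologicalSpace X] (A : Set X) : Prop :=
  A ⊆ closure (interior A)

/-- Generic Hurewicz-type selection principle for covers by sets satisfying `P`. -/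
def HurewiczFor (X : Type*) [TopologicalSpace X] (P : Set X → Prop) : Prop :=
  ∀ 𝒜 : ℕ → Set (Set X),
    (∀ k, (∀ U ∈ 𝒜 k, P U) ∧ ⋃₀ 𝒜 k = Set.univ) →
    ∃ ℬ : ℕ → Set (Set X),
      (∀ k, ℬ k ⊆ 𝒜 k ∧ (ℬ k).Finite) ∧
      ∀ x : X, ∀ᶠ k in Filter.atTop, x ∈ ⋃₀ ℬ k

def Hurewicz (X : Type*) [TopologicalSpace X] : Prop := HurewiczFor X IsOpen
def AlphaHurewicz (X : Type*) [TopologicalSpace X] : Prop := HurewiczFor X AlphaOpen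
def ThetaHurewicz (X : Type*) [TopologicalSpace X] : Prop := HurewiczFor X ThetaOpen
def MildlyHurewicz (X : Type*) [TopologicalSpace X] : Prop := HurewiczFor X IsClopen
def SemiHurewicz (X : Type*) [TopologicalSpace X] : Prop := HurewiczFor X SemiOpen

def AlmostHurewicz (X : Type*) [TopologicalSpace X] : Prop :=
  ∀ 𝒜 : ℕ → Set (Set X),
    (∀ k, (∀ U ∈ 𝒜 k, IsOpen U) ∧ ⋃₀ 𝒜 k = Set.univ) →
    ∃ ℬ : ℕ → Set (Set X),
      (∀ k, ℬ k ⊆ 𝒜 k ∧ (ℬ k).Finite) ∧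
      ∀ x : X, ∀ᶠ k in Filter.atTop, ∃ B ∈ ℬ k, x ∈ closure B

/-!
Refine a θ-open cover `𝒜` to the open cover by all open sets whose closure lies in a member
of `𝒜`. Almost Hurewicz selects finitely many members of the refinement whose closures
eventually cover each point; replacing each selected set by a member of `𝒜` containing its
closure gives the θ-Hurewicz selection.
-/

section ClosureRefinement

variable {X : Type*} [TopologicalSpace X]

def closureRefinement (𝒜 : Set (Set X)) : Set (Set X) :=
  {B | IsOpen B ∧ ∃ A ∈ 𝒜, closure B ⊆ A}

theorem sUnion_closureRefinement {𝒜 : Set (Set X)} (h𝒜 : ∀ A ∈ 𝒜, ThetaOpen A) :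
    ⋃₀ closureRefinement 𝒜 = ⋃₀ 𝒜 := by
  refine subset_antisymm ?_ ?_
  · rintro x ⟨B, ⟨-, A, hA, hBA⟩, hxB⟩
    exact ⟨A, hA, hBA (subset_closure hxB)⟩
  · rintro x ⟨A, hA, hxA⟩
    obtain ⟨B, hB, hxB, hBA⟩ := h𝒜 A hA x hxA
    exact ⟨B, ⟨hB, A, hA, hBA⟩, hxB⟩

theorem exists_finite_subset_closure_subset_sUnion {𝒜 ℬ : Set (Set X)} (hℬ : ℬ.Finite)
    (hℬ𝒜 : ∀ B ∈ ℬ, ∃ A ∈ 𝒜, closure B ⊆ A) :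
    ∃ 𝒟 ⊆ 𝒜, 𝒟.Finite ∧ ∀ B ∈ ℬ, closure B ⊆ ⋃₀ 𝒟 := by
  choose! f hf𝒜 hfB using hℬ𝒜
  refine ⟨f '' ℬ, image_subset_iff.2 hf𝒜, hℬ.image f, fun B hB => ?_⟩
  exact (hfB B hB).trans (subset_sUnion_of_mem (mem_image_of_mem f hB))

end ClosureRefinement

theorem almostHurewicz_thetaHurewicz (X : Type*) [TopologicalSpace X]
    (h : AlmostHurewicz X) : ThetaHurewicz X := by
  intro 𝒜 h𝒜
  obtain ⟨ℬ, hℬ, hcover⟩ := h (fun k => closureRefinement (𝒜 k)) fun k =>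
    ⟨fun _ hB => hB.1, by rw [sUnion_closureRefinement (h𝒜 k).1, (h𝒜 k).2]⟩
  choose 𝒟 h𝒟𝒜 h𝒟 hℬ𝒟 using fun k =>
    exists_finite_subset_closure_subset_sUnion (hℬ k).2 fun B hB => ((hℬ k).1 hB).2
  refine ⟨𝒟, fun k => ⟨h𝒟𝒜 k, h𝒟 k⟩, fun x => ?_⟩
  filter_upwards [hcover x] with k ⟨B, hB, hxB⟩
  exact hℬ𝒟 k B hB hxB
end

section
/- In an extremally disconnected topological space, every mildly Hurewicz semi-regular space is semi-Hurewicz. (In particular, for extremally disconnected semi-regular spaces the properties semi-Hurewicz, α-Hurewicz, Hurewicz, nearly Hurewicz, almost Hurewicz, θ-Hurewicz, and mildly Hurewicz are all equivalent.) -/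
/-!
In an extremally disconnected space the closure of the interior of a semi-open set `B` is clopen,
and it lies in `sCl B`, because every semi-closed `D` satisfies `interior (closure D) ⊆ D`.
Hence semi-regularity puts, inside every semi-open set around a point, a clopen neighbourhood of
it. Refining a sequence of semi-open covers by such clopen sets, selecting finitely many of them
by the mildly Hurewicz property, and replacing each selected clopen set by a member of the
original cover containing it gives the semi-Hurewicz selection.
-/

open Filter Topology Set

def SemiClosed {X : Type*} [TopologicalSpace X] (A : Set X) : Prop := SemiOpen Aᶜ

def sCl {X : Type*} [TopologicalSpace X] (A : Set X) : Set X :=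
  ⋂₀ {C : Set X | SemiClosed C ∧ A ⊆ C}

def SemiRegularSpace (X : Type*) [TopologicalSpace X] : Prop :=
  ∀ (x : X) (A : Set X), SemiOpen A → x ∈ A →
    ∃ B : Set X, SemiOpen B ∧ x ∈ B ∧ sCl B ⊆ A

section

variable {X : Type*} [TopologicalSpace X]

theorem SemiClosed.interior_closure_subset {D : Set X} (hD : SemiClosed D) :
    interior (closure D) ⊆ D := by
  rw [SemiClosed, SemiOpen, interior_compl, closure_compl] at hD
  exact compl_subset_compl.mp hD

theorem interior_closure_interior_subset_sCl (B : Set X) :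
    interior (closure (interior B)) ⊆ sCl B := by
  rintro y hy D ⟨hD, hBD⟩
  have hmono : interior (closure (interior B)) ⊆ interior (closure D) :=
    interior_mono (closure_mono (interior_subset.trans hBD))
  exact hD.interior_closure_subset (hmono hy)

theorem closure_interior_subset_sCl [ExtremallyDisconnected X] (B : Set X) :
    closure (interior B) ⊆ sCl B := by
  have hopen : IsOpen (closure (interior B)) :=
    ExtremallyDisconnected.open_closure _ isOpen_interior
  simpa only [hopen.interior_eq] using interior_closure_interior_subset_sCl B

theorem SemiRegularSpace.exists_isClopen_mem_subset [ExtremallyDisconnected X]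
    (hreg : SemiRegularSpace X) {A : Set X} (hA : SemiOpen A) {x : X} (hx : x ∈ A) :
    ∃ C, IsClopen C ∧ x ∈ C ∧ C ⊆ A := by
  obtain ⟨B, hB, hxB, hBA⟩ := hreg x A hA hx
  exact ⟨closure (interior B),
    ⟨isClosed_closure, ExtremallyDisconnected.open_closure _ isOpen_interior⟩,
    hB hxB, (closure_interior_subset_sCl B).trans hBA⟩

theorem HurewiczFor.of_forall_mem_exists_subset {P Q : Set X → Prop}
    (hPQ : ∀ A, P A → ∀ x ∈ A, ∃ C, Q C ∧ x ∈ C ∧ C ⊆ A) (hQ : HurewiczFor X Q) :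
    HurewiczFor X P := by
  intro 𝒜 h𝒜
  set 𝒞 : ℕ → Set (Set X) := fun k => {C | Q C ∧ ∃ A ∈ 𝒜 k, C ⊆ A}
  have h𝒞 : ∀ k, (∀ C ∈ 𝒞 k, Q C) ∧ ⋃₀ 𝒞 k = univ := by
    refine fun k => ⟨fun C hC => hC.1, eq_univ_of_forall fun x => ?_⟩
    obtain ⟨A, hA, hxA⟩ := mem_sUnion.mp ((h𝒜 k).2.symm ▸ mem_univ x)
    obtain ⟨C, hC, hxC, hCA⟩ := hPQ A ((h𝒜 k).1 A hA) x hxA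
    exact ⟨C, ⟨hC, A, hA, hCA⟩, hxC⟩
  obtain ⟨ℬ, hℬ, hℬx⟩ := hQ 𝒞 h𝒞
  choose! f hf𝒜 hCf using fun k (C : Set X) (hC : C ∈ 𝒞 k) => hC.2
  refine ⟨fun k => f k '' ℬ k, fun k => ⟨?_, (hℬ k).2.image _⟩, fun x => ?_⟩
  · rintro _ ⟨C, hC, rfl⟩
    exact hf𝒜 k C ((hℬ k).1 hC)
  · filter_upwards [hℬx x] with k ⟨C, hC, hxC⟩
    exact ⟨f k C, mem_image_of_mem _ hC, hCf k C ((hℬ k).1 hC) hxC⟩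

end

theorem mildlyHurewicz_semiHurewicz_of_extremallyDisconnected_semiRegular
    (X : Type*) [TopologicalSpace X] [ExtremallyDisconnected X]
    (hreg : SemiRegularSpace X) (h : MildlyHurewicz X) : SemiHurewicz X :=
  HurewiczFor.of_forall_mem_exists_subset
    (fun _ hA _ hx => hreg.exists_isClopen_mem_subset hA hx) h
end

section
/- A clopen subspace of an α-Hurewicz space is α-Hurewicz. -/
open Filter Topology Set

/-!
Push an α-open cover of `Y` forward along the inclusion `Y → X`: continuous open maps preserve
α-openness, and the open set `X \ Y` completes the images to a cover of `X`. A Hurewicz selection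
for these covers of `X` pulls back to one for the covers of `Y`, because `X \ Y` misses `Y`.
-/

section AlphaOpen

variable {X Y : Type*} [TopologicalSpace X] [TopologicalSpace Y]

theorem IsOpen.alphaOpen {U : Set X} (hU : IsOpen U) : AlphaOpen U := by
  rw [AlphaOpen, hU.interior_eq]
  exact hU.subset_interior_closure

theorem AlphaOpen.image {f : X → Y} (hf : Continuous f) (hf' : IsOpenMap f) {U : Set X}
    (hU : AlphaOpen U) : AlphaOpen (f '' U) :=
  calc f '' U ⊆ f '' interior (closure (interior U)) := image_mono hU
    _ ⊆ interior (f '' closure (interior U)) := hf'.image_interior_subset _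
    _ ⊆ interior (closure (f '' interior U)) :=
      interior_mono (image_closure_subset_closure_image hf)
    _ ⊆ interior (closure (interior (f '' U))) :=
      interior_mono (closure_mono (hf'.image_interior_subset U))

end AlphaOpen

theorem HurewiczFor.of_injective {X Y : Type*} [TopologicalSpace X] [TopologicalSpace Y]
    {P : Set Y → Prop} {Q : Set X → Prop} {e : Y → X} (he : Function.Injective e)
    (hPQ : ∀ U, P U → Q (e '' U)) (hcompl : Q (range e)ᶜ) (h : HurewiczFor X Q) :
    HurewiczFor Y P := by
  intro 𝒜 h𝒜
  obtain ⟨ℬ, hℬ𝒜, hℬ⟩ := h (fun k => insert (range e)ᶜ (image e '' 𝒜 k)) fun k => by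
    refine ⟨?_, ?_⟩
    · rintro U (rfl | ⟨V, hV, rfl⟩)
      exacts [hcompl, hPQ V ((h𝒜 k).1 V hV)]
    · refine eq_univ_of_forall fun x => ?_
      by_cases hx : x ∈ range e
      · obtain ⟨y, rfl⟩ := hx
        obtain ⟨U, hU, hyU⟩ := mem_sUnion.1 ((h𝒜 k).2.symm ▸ mem_univ y)
        exact ⟨e '' U, Or.inr (mem_image_of_mem _ hU), mem_image_of_mem e hyU⟩
      · exact ⟨_, Or.inl rfl, hx⟩
  refine ⟨fun k => {U ∈ 𝒜 k | e '' U ∈ ℬ k}, fun k => ⟨fun U hU => hU.1, ?_⟩, fun y => ?_⟩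
  · exact ((hℬ𝒜 k).2.preimage (image_injective.2 he).injOn).subset fun U hU => hU.2
  · filter_upwards [hℬ (e y)] with k ⟨V, hVℬ, hyV⟩
    rcases (hℬ𝒜 k).1 hVℬ with rfl | ⟨U, hU, rfl⟩
    · exact absurd (mem_range_self y) hyV
    · exact ⟨U, ⟨hU, hVℬ⟩, (he.mem_set_image).1 hyV⟩

theorem clopen_subspace_alphaHurewicz (X : Type*) [TopologicalSpace X]
    (Y : Set X) (hY : IsClopen Y) (h : AlphaHurewicz X) : AlphaHurewicz Y := by
  refine HurewiczFor.of_injective Subtype.val_injective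
    (fun U hU => hU.image continuous_subtype_val hY.isOpen.isOpenMap_subtype_val) ?_ h
  rw [Subtype.range_coe]
  exact hY.isClosed.isOpen_compl.alphaOpen
end

section
/- A clopen subspace of a θ-Hurewicz space is θ-Hurewicz. -/
open Filter Topology Set

/-! A θ-open cover of `Y` becomes a θ-open cover of `X` by adding the clopen set `Yᶜ`; a finite
selection from it, with `Yᶜ` discarded, is a selection for the original cover. -/

theorem IsClopen.thetaOpen {X : Type*} [TopologicalSpace X] {A : Set X} (hA : IsClopen A) :
    ThetaOpen A :=
  fun _ hx => ⟨A, hA.isOpen, hx, hA.isClosed.closure_eq.subset⟩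

theorem ThetaOpen.image {X Y : Type*} [TopologicalSpace X] [TopologicalSpace Y] {f : Y → X}
    (hfo : IsOpenMap f) (hfc : IsClosedMap f) {U : Set Y}
    (hU : ThetaOpen U) : ThetaOpen (f '' U) := by
  rintro _ ⟨y, hy, rfl⟩
  obtain ⟨B, hB, hyB, hBU⟩ := hU y hy
  refine ⟨f '' B, hfo B hB, mem_image_of_mem f hyB, ?_⟩
  exact (hfc.closure_image_subset B).trans (image_mono hBU)

theorem HurewiczFor.subtype {X : Type*} [TopologicalSpace X] {P : Set X → Prop}
    {Y : Set X} {Q : Set Y → Prop} (hX : HurewiczFor X P) (hYc : P Yᶜ)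
    (hQP : ∀ U, Q U → P (Subtype.val '' U)) : HurewiczFor Y Q := by
  intro 𝒜 h𝒜
  obtain ⟨ℬ, hℬ, hcover⟩ := hX (fun k => image Subtype.val '' 𝒜 k ∪ {Yᶜ}) fun k => by
    refine ⟨?_, eq_univ_of_forall fun x => ?_⟩
    · rintro _ (⟨U, hU, rfl⟩ | rfl)
      exacts [hQP U ((h𝒜 k).1 U hU), hYc]
    · by_cases hx : x ∈ Y
      · obtain ⟨U, hU, hxU⟩ := mem_sUnion.1 ((h𝒜 k).2.symm ▸ mem_univ (⟨x, hx⟩ : Y))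
        exact ⟨_, Or.inl ⟨U, hU, rfl⟩, ⟨x, hx⟩, hxU, rfl⟩
      · exact ⟨Yᶜ, Or.inr rfl, hx⟩
  refine ⟨fun k => 𝒜 k ∩ image Subtype.val ⁻¹' ℬ k, fun k => ⟨inter_subset_left, ?_⟩,
    fun y => ?_⟩
  · exact ((hℬ k).2.preimage Subtype.val_injective.image_injective.injOn).subset
      inter_subset_right
  · filter_upwards [hcover y] with k ⟨V, hV, hyV⟩
    rcases (hℬ k).1 hV with ⟨U, hU, rfl⟩ | rfl
    · exact ⟨U, ⟨hU, hV⟩, Subtype.val_injective.mem_set_image.1 hyV⟩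
    · exact absurd y.2 hyV

theorem clopen_subspace_thetaHurewicz (X : Type*) [TopologicalSpace X]
    (Y : Set X) (hY : IsClopen Y) (h : ThetaHurewicz X) : ThetaHurewicz Y :=
  HurewiczFor.subtype h hY.compl.thetaOpen fun _ hU =>
    hU.image hY.isOpen.isOpenMap_subtype_val hY.isClosed.isClosedMap_subtype_val
end

section
/- If f : X → Y is a surjective α-continuous map and X is α-Hurewicz, then Y is Hurewicz. -/
open Filter Topology Set

/-! Pull each cover of `Y` back along `f`, select finite subfamilies upstairs, and push the
selection down: the sets of the `k`-th cover whose preimages were selected. Surjectivity makes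
`V ↦ f ⁻¹' V` injective, so finitely many preimages come from finitely many sets. -/

theorem sUnion_image_preimage_eq_univ {X Y : Type*} (f : X → Y) {𝒜 : Set (Set Y)}
    (h𝒜 : ⋃₀ 𝒜 = univ) : ⋃₀ ((f ⁻¹' ·) '' 𝒜) = univ := by
  rw [sUnion_image, ← preimage_sUnion, h𝒜, preimage_univ]

theorem Function.Surjective.finite_setOf_preimage_mem {X Y : Type*} {f : X → Y}
    (hf : Function.Surjective f) (𝒜 : Set (Set Y)) {ℬ : Set (Set X)} (hℬ : ℬ.Finite) :
    {V ∈ 𝒜 | f ⁻¹' V ∈ ℬ}.Finite :=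
  (hℬ.preimage hf.preimage_injective.injOn).subset fun _ hV => hV.2

theorem HurewiczFor.of_surjective {X Y : Type*} [TopologicalSpace X] [TopologicalSpace Y]
    {P : Set X → Prop} {Q : Set Y → Prop} {f : X → Y} (hf : Function.Surjective f)
    (hPQ : ∀ V, Q V → P (f ⁻¹' V)) (h : HurewiczFor X P) : HurewiczFor Y Q := by
  intro 𝒜 h𝒜
  obtain ⟨ℬ, hℬ, hℬcov⟩ := h (fun k => (f ⁻¹' ·) '' 𝒜 k) fun k =>
    ⟨forall_mem_image.2 fun V hV => hPQ V ((h𝒜 k).1 V hV),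
      sUnion_image_preimage_eq_univ f (h𝒜 k).2⟩
  refine ⟨fun k => {V ∈ 𝒜 k | f ⁻¹' V ∈ ℬ k},
    fun k => ⟨sep_subset _ _, hf.finite_setOf_preimage_mem _ (hℬ k).2⟩, fun y => ?_⟩
  obtain ⟨x, rfl⟩ := hf y
  filter_upwards [hℬcov x] with k ⟨B, hB, hxB⟩
  obtain ⟨V, hV, rfl⟩ := (hℬ k).1 hB
  exact ⟨V, ⟨hV, hB⟩, hxB⟩

theorem alphaContinuous_image_hurewicz {X Y : Type*} [TopologicalSpace X]
    [TopologicalSpace Y] (f : X → Y) (hf : Function.Surjective f)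
    (hc : ∀ V : Set Y, IsOpen V → AlphaOpen (f ⁻¹' V))
    (h : AlphaHurewicz X) : Hurewicz Y :=
  HurewiczFor.of_surjective hf hc h
end

section
/- A space (X, τ) is α-Hurewicz if and only if there exists a strongly α-open bijection from (X, τ) onto some Hurewicz space (Y, τ'). -/
open Filter Topology Set

/-! The α-open sets of `X` form a topology `τ_α`, and `X` is α-Hurewicz exactly when `(X, τ_α)` is
Hurewicz, so the identity `(X, τ) → (X, τ_α)` is the required bijection. Conversely, a bijection
sending α-open sets to open sets carries α-open covers of `X` to open covers of `Y`, and a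
Hurewicz selection there pulls back along the bijection. -/

theorem IsOpen.interior_closure_inter_subset {X : Type*} [TopologicalSpace X] {s t : Set X}
    (ht : IsOpen t) :
    interior (closure s) ∩ interior (closure t) ⊆ interior (closure (s ∩ t)) := by
  refine interior_maximal ?_ (isOpen_interior.inter isOpen_interior)
  calc interior (closure s) ∩ interior (closure t)
      ⊆ interior (closure s) ∩ closure t := inter_subset_inter_right _ interior_subset
    _ ⊆ closure (interior (closure s) ∩ t) := isOpen_interior.inter_closure
    _ ⊆ closure (closure s ∩ t) := closure_mono (inter_subset_inter_left _ interior_subset)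
    _ ⊆ closure (closure (s ∩ t)) := closure_mono ht.closure_inter
    _ = closure (s ∩ t) := closure_closure

theorem AlphaOpen.inter {X : Type*} [TopologicalSpace X] {A B : Set X}
    (hA : AlphaOpen A) (hB : AlphaOpen B) : AlphaOpen (A ∩ B) := by
  unfold AlphaOpen
  rw [interior_inter]
  exact (inter_subset_inter hA hB).trans isOpen_interior.interior_closure_inter_subset

abbrev alphaTopology (X : Type*) [TopologicalSpace X] : TopologicalSpace X where
  IsOpen := AlphaOpen
  isOpen_univ := by simp [AlphaOpen]
  isOpen_inter _ _ := AlphaOpen.inter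
  isOpen_sUnion S hS :=
    sUnion_subset fun A hA =>
      (hS A hA).trans (interior_mono (closure_mono (interior_mono (subset_sUnion_of_mem hA))))

theorem HurewiczFor.of_bijective {X Y : Type*} [TopologicalSpace X] [TopologicalSpace Y]
    {P : Set X → Prop} {Q : Set Y → Prop} (hY : HurewiczFor Y Q) {f : X → Y}
    (hf : Function.Bijective f) (hPQ : ∀ A, P A → Q (f '' A)) : HurewiczFor X P := by
  intro 𝒜 h𝒜
  have hcover : ∀ k, (∀ V ∈ image f '' 𝒜 k, Q V) ∧ ⋃₀ (image f '' 𝒜 k) = univ := fun k => by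
    refine ⟨forall_mem_image.2 fun U hU => hPQ U ((h𝒜 k).1 U hU), ?_⟩
    rw [sUnion_image, ← image_iUnion₂, ← sUnion_eq_biUnion, (h𝒜 k).2, image_univ_of_surjective hf.2]
  obtain ⟨ℬ, hℬ, hℬcover⟩ := hY _ hcover
  refine ⟨fun k => {U ∈ 𝒜 k | f '' U ∈ ℬ k}, fun k => ⟨sep_subset _ _, ?_⟩, fun x => ?_⟩
  · exact ((hℬ k).2.preimage (image_injective.2 hf.1).injOn).subset fun _ hU => hU.2
  · filter_upwards [hℬcover (f x)] with k ⟨V, hVℬ, hxV⟩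
    obtain ⟨U, hU𝒜, rfl⟩ := (hℬ k).1 hVℬ
    exact ⟨U, ⟨hU𝒜, hVℬ⟩, (hf.1.mem_set_image).1 hxV⟩

theorem alphaHurewicz_iff_stronglyAlphaOpen_bijection (X : Type u) [TopologicalSpace X] :
    AlphaHurewicz X ↔
      ∃ (Y : Type u) (_ : TopologicalSpace Y) (f : X → Y),
        Function.Bijective f ∧ (∀ A : Set X, AlphaOpen A → IsOpen (f '' A)) ∧
        Hurewicz Y := by
  constructor
  · intro h
    exact ⟨X, alphaTopology X, id, Function.bijective_id, fun A hA => by rwa [image_id], h⟩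
  · rintro ⟨Y, _, f, hf, hopen, hY⟩
    exact HurewiczFor.of_bijective hY hf hopen
end

section
/- Every mildly Hurewicz subspace X of the Baire space ω^ω is bounded with respect to eventual domination ≤*; i.e., there exists f ∈ ω^ω with g(n) ≤ f(n) for all but finitely many n, for every g ∈ X. In particular, no dominating subset of ω^ω is mildly Hurewicz. -/
open Filter Topology Set

/- A mildly Hurewicz space admits, for every `k`, the clopen cover `{y | φ y k ≤ m}` (m ∈ ℕ);
the finite subfamilies selected from these increasing covers are each contained in a single member
`{y | φ y k ≤ f k}`, and the resulting `f` bounds every `φ y`. A bounded family cannot be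
dominating, since nothing in it eventually reaches `f + 1`. -/

theorem Set.Finite.exists_sUnion_subset_of_subset_range {α ι : Type*} [Preorder ι]
    [IsDirectedOrder ι] [Nonempty ι] {V : ι → Set α} (hV : Monotone V) {s : Set (Set α)}
    (hs : s.Finite) (hsV : s ⊆ range V) : ∃ i, ⋃₀ s ⊆ V i := by
  obtain ⟨t, -, ht, rfl⟩ := exists_subset_image_finite_and.1
    ⟨s, by rwa [image_univ], hs, rfl⟩
  obtain ⟨i, hi⟩ := ht.exists_le
  exact ⟨i, sUnion_subset (by rintro _ ⟨j, hj, rfl⟩; exact hV (hi j hj))⟩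

theorem MildlyHurewicz.exists_eventually_le {Y : Type*} [TopologicalSpace Y]
    (hY : MildlyHurewicz Y) (φ : Y → ℕ → ℕ) (hφ : ∀ k, Continuous fun y ↦ φ y k) :
    ∃ f : ℕ → ℕ, ∀ y, ∀ᶠ k in atTop, φ y k ≤ f k := by
  set V : ℕ → ℕ → Set Y := fun k m ↦ {y | φ y k ≤ m}
  have hV_mono : ∀ k, Monotone (V k) := fun k _ _ hmn _ hy ↦ le_trans hy hmn
  have hV_clopen : ∀ k m, IsClopen (V k m) := fun k m ↦
    (isClopen_discrete (Iic m)).preimage (hφ k)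
  have hV_cover : ∀ k, ⋃₀ range (V k) = univ := fun k ↦
    eq_univ_of_forall fun y ↦ ⟨V k (φ y k), mem_range_self _, le_refl (φ y k)⟩
  obtain ⟨ℬ, hℬ, hcov⟩ := hY (fun k ↦ range (V k))
    fun k ↦ ⟨forall_mem_range.2 (hV_clopen k), hV_cover k⟩
  choose f hf using fun k ↦ (hℬ k).2.exists_sUnion_subset_of_subset_range (hV_mono k) (hℬ k).1
  exact ⟨f, fun y ↦ (hcov y).mono fun k hk ↦ hf k hk⟩

theorem not_forall_exists_eventually_ge_of_eventually_le {ι β : Type*} {l : Filter ι} [l.NeBot]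
    [Preorder β] [NoMaxOrder β] {X : Set (ι → β)} {f : ι → β} (hf : ∀ g ∈ X, ∀ᶠ n in l, g n ≤ f n) :
    ¬ ∀ f' : ι → β, ∃ g ∈ X, ∀ᶠ n in l, f' n ≤ g n := by
  intro hdom
  choose f' hf' using fun n ↦ exists_gt (f n)
  obtain ⟨g, hgX, hg⟩ := hdom f'
  obtain ⟨n, hge, hle⟩ := (hg.and (hf g hgX)).exists
  exact (hf' n).not_ge (hge.trans hle)

theorem mildlyHurewicz_subset_baire_bounded (X : Set (ℕ → ℕ))
    (h : MildlyHurewicz X) :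
    (∃ f : ℕ → ℕ, ∀ g ∈ X, ∀ᶠ n in Filter.atTop, g n ≤ f n) ∧
    ¬ (∀ f : ℕ → ℕ, ∃ g ∈ X, ∀ᶠ n in Filter.atTop, f n ≤ g n) := by
  obtain ⟨f, hf⟩ := h.exists_eventually_le Subtype.val fun k ↦
    (continuous_apply k).comp continuous_subtype_val
  have hbound : ∀ g ∈ X, ∀ᶠ n in atTop, g n ≤ f n := fun g hg ↦ hf ⟨g, hg⟩
  exact ⟨⟨f, hbound⟩, not_forall_exists_eventually_ge_of_eventually_le hbound⟩
end

section
/- If X is a θ-Lindelöf space of cardinality strictly less than the bounding number 𝔟, then X is θ-Hurewicz. -/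
open Filter Topology Set

/-- The bounding number 𝔟: least cardinality of a ≤*-unbounded family in ℕ → ℕ. -/
noncomputable def boundingNumber : Cardinal :=
  sInf {c : Cardinal |
    ∃ H : Set (ℕ → ℕ),
      (¬ ∃ g : ℕ → ℕ, ∀ f ∈ H, ∀ᶠ n in Filter.atTop, f n ≤ g n) ∧
      Cardinal.mk H = c}

def ThetaLindelof (X : Type*) [TopologicalSpace X] : Prop :=
  ∀ 𝒜 : Set (Set X), (∀ U ∈ 𝒜, ThetaOpen U) → ⋃₀ 𝒜 = Set.univ →
    ∃ 𝒞 ⊆ 𝒜, 𝒞.Countable ∧ ⋃₀ 𝒞 = Set.univ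

/-! Enumerate countable subcovers of the `k`-th cover as `U k 0, U k 1, …` and let `F x k` be an
index `n` with `x ∈ U k n`. Fewer than `𝔟` functions `F x` have a common `≤*`-bound `g`, and the
finite families `U k 0, …, U k (g k)` witness the Hurewicz property. -/

theorem exists_eventually_le_of_mk_lt_boundingNumber {ι : Type u} (F : ι → ℕ → ℕ)
    (hι : Cardinal.mk ι < Cardinal.lift.{u} boundingNumber) :
    ∃ g : ℕ → ℕ, ∀ i, ∀ᶠ n in atTop, F i n ≤ g n := by
  by_contra hunbdd
  have hle : boundingNumber ≤ Cardinal.mk (range F) :=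
    csInf_le' ⟨range F, by simpa using hunbdd, rfl⟩
  have hrange : Cardinal.lift.{u} (Cardinal.mk (range F)) ≤ Cardinal.mk ι := by
    simpa using Cardinal.mk_range_le_lift (f := F)
  exact (Cardinal.lift_le.2 hle).not_gt (hrange.trans_lt hι)

theorem exists_eventually_mem_of_mk_lt_boundingNumber {X : Type u} (U : ℕ → ℕ → Set X)
    (hU : ∀ k, ⋃ n, U k n = univ) (hX : Cardinal.mk X < Cardinal.lift.{u} boundingNumber) :
    ∃ g : ℕ → ℕ, ∀ x, ∀ᶠ k in atTop, ∃ n ≤ g k, x ∈ U k n := by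
  choose F hF using fun x k => iUnion_eq_univ_iff.1 (hU k) x
  obtain ⟨g, hg⟩ := exists_eventually_le_of_mk_lt_boundingNumber F hX
  exact ⟨g, fun x => (hg x).mono fun k hk => ⟨F x k, hk, hF x k⟩⟩

theorem hurewiczFor_of_countable_subcover_of_mk_lt_boundingNumber {X : Type u}
    [TopologicalSpace X] {P : Set X → Prop}
    (hL : ∀ 𝒜 : Set (Set X), (∀ U ∈ 𝒜, P U) → ⋃₀ 𝒜 = univ →
      ∃ 𝒞 ⊆ 𝒜, 𝒞.Countable ∧ ⋃₀ 𝒞 = univ)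
    (hX : Cardinal.mk X < Cardinal.lift.{u} boundingNumber) :
    HurewiczFor X P := by
  intro 𝒜 h𝒜
  cases isEmpty_or_nonempty X with
  | inl _ => exact ⟨fun _ => ∅, fun _ => ⟨empty_subset _, finite_empty⟩, isEmptyElim⟩
  | inr _ =>
    have hseq : ∀ k, ∃ U : ℕ → Set X, range U ⊆ 𝒜 k ∧ ⋃ n, U n = univ := by
      intro k
      obtain ⟨𝒞, h𝒞𝒜, h𝒞, hcov⟩ := hL (𝒜 k) (h𝒜 k).1 (h𝒜 k).2
      obtain ⟨U, rfl⟩ := h𝒞.exists_eq_range (.of_sUnion_eq_univ hcov)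
      exact ⟨U, h𝒞𝒜, by rwa [sUnion_range] at hcov⟩
    choose U hU𝒜 hU using hseq
    obtain ⟨g, hg⟩ := exists_eventually_mem_of_mk_lt_boundingNumber U hU hX
    refine ⟨fun k => U k '' Iic (g k),
      fun k => ⟨(image_subset_range _ _).trans (hU𝒜 k), (finite_Iic _).image _⟩, fun x => ?_⟩
    filter_upwards [hg x] with k ⟨n, hn, hx⟩
    exact ⟨U k n, mem_image_of_mem _ hn, hx⟩

theorem thetaLindelof_small_thetaHurewicz (X : Type u) [TopologicalSpace X]
    (hL : ThetaLindelof X) (hcard : Cardinal.mk X < Cardinal.lift.{u} boundingNumber) :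
    ThetaHurewicz X :=
  hurewiczFor_of_countable_subcover_of_mk_lt_boundingNumber hL hcard
end

section
/- If X is a mildly Lindelöf space of cardinality strictly less than the bounding number 𝔟, then X is mildly Hurewicz. -/
open Filter Topology Set

def MildlyLindelof (X : Type*) [TopologicalSpace X] : Prop :=
  ∀ 𝒜 : Set (Set X), (∀ U ∈ 𝒜, IsClopen U) → ⋃₀ 𝒜 = Set.univ →
    ∃ 𝒞 ⊆ 𝒜, 𝒞.Countable ∧ ⋃₀ 𝒞 = Set.univ

/-!
Every clopen cover of `X` has a countable subcover, enumerated as `(U k n)ₙ` for the `k`-th cover.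
Choosing for each `x` a function `k ↦ nₖ` with `x ∈ U k nₖ` gives fewer than `𝔟` functions
`ℕ → ℕ`, so a single `g` eventually dominates all of them, and `{U k n | n ≤ g k}` are the
required finite subfamilies.
-/

theorem exists_eventuallyLE_of_mk_lt_boundingNumber {ι : Type u} (f : ι → ℕ → ℕ)
    (hι : Cardinal.mk ι < Cardinal.lift.{u} boundingNumber) :
    ∃ g : ℕ → ℕ, ∀ i, f i ≤ᶠ[atTop] g := by
  by_contra h
  have hunbdd : ¬ ∃ g : ℕ → ℕ, ∀ φ ∈ range f, ∀ᶠ n in atTop, φ n ≤ g n := by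
    rintro ⟨g, hg⟩
    exact h ⟨g, fun i => hg (f i) ⟨i, rfl⟩⟩
  have hb : boundingNumber ≤ Cardinal.mk (range f) := csInf_le' ⟨range f, hunbdd, rfl⟩
  refine hι.not_ge ?_
  calc Cardinal.lift.{u} boundingNumber
      ≤ Cardinal.lift.{u} (Cardinal.mk (range f)) := Cardinal.lift_le.2 hb
    _ ≤ Cardinal.lift.{0} (Cardinal.mk ι) := Cardinal.mk_range_le_lift
    _ = Cardinal.mk ι := Cardinal.lift_id' _

theorem exists_eventually_mem_biUnion_le {X : Type*} (U : ℕ → ℕ → Set X)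
    (hU : ∀ k, ⋃ n, U k n = univ)
    (hbdd : ∀ f : X → ℕ → ℕ, ∃ g : ℕ → ℕ, ∀ x, f x ≤ᶠ[atTop] g) :
    ∃ g : ℕ → ℕ, ∀ x, ∀ᶠ k in atTop, x ∈ ⋃ n ≤ g k, U k n := by
  have hmem : ∀ x k, ∃ n, x ∈ U k n := fun x k => mem_iUnion.1 (hU k ▸ mem_univ x)
  choose N hN using hmem
  obtain ⟨g, hg⟩ := hbdd N
  exact ⟨g, fun x => (hg x).mono fun k hk => mem_iUnion₂.2 ⟨N x k, hk, hN x k⟩⟩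

theorem hurewiczFor_of_countable_subcover {X : Type*} [TopologicalSpace X] {P : Set X → Prop}
    (hL : ∀ 𝒜 : Set (Set X), (∀ U ∈ 𝒜, P U) → ⋃₀ 𝒜 = univ →
      ∃ 𝒞 ⊆ 𝒜, 𝒞.Countable ∧ ⋃₀ 𝒞 = univ)
    (hbdd : ∀ f : X → ℕ → ℕ, ∃ g : ℕ → ℕ, ∀ x, f x ≤ᶠ[atTop] g) :
    HurewiczFor X P := by
  intro 𝒜 h𝒜
  cases isEmpty_or_nonempty X with
  | inl _ => exact ⟨fun _ => ∅, fun _ => ⟨empty_subset _, finite_empty⟩, isEmptyElim⟩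
  | inr _ =>
    choose 𝒞 h𝒞𝒜 h𝒞count h𝒞cov using fun k => hL (𝒜 k) (h𝒜 k).1 (h𝒜 k).2
    choose U hU using fun k => (h𝒞count k).exists_eq_range (.of_sUnion_eq_univ (h𝒞cov k))
    have hUcov : ∀ k, ⋃ n, U k n = univ := fun k => by rw [← sUnion_range, ← hU k, h𝒞cov k]
    obtain ⟨g, hg⟩ := exists_eventually_mem_biUnion_le U hUcov hbdd
    refine ⟨fun k => U k '' Iic (g k), fun k => ⟨?_, (finite_Iic (g k)).image _⟩, ?_⟩
    · rintro _ ⟨n, -, rfl⟩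
      exact h𝒞𝒜 k (hU k ▸ mem_range_self n)
    · intro x
      simpa only [sUnion_image, mem_Iic] using hg x

theorem mildlyLindelof_small_mildlyHurewicz (X : Type u) [TopologicalSpace X]
    (hL : MildlyLindelof X) (hcard : Cardinal.mk X < Cardinal.lift.{u} boundingNumber) :
    MildlyHurewicz X :=
  hurewiczFor_of_countable_subcover hL
    fun f => exists_eventuallyLE_of_mk_lt_boundingNumber f hcard
end
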